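/- Let H be a symmetric 4×4 complex Hadamard matrix in dephased form and let ρ ∈ ℂ be a non-real number with |ρ| = 1 such that H[j,j] = ρ/2 for some index j. Then the eigenvalues of H are 1, 1, −1, ρ; that is, the characteristic polynomial of H equals (X − 1)²·(X + 1)·(X − ρ). -/

import Mathlib

/-!
Write `K = 2H`. Orthogonality of each row `i ≠ 0` to the row of ones says that the three
unimodular numbers `K i 1, K i 2, K i 3` sum to `-1`, which forces one of them to be `-1`. After a
permutation of the indices fixing `0` we may therefore assume `K 1 1 = ρ` and `K 1 3 = -1`;
orthogonality of rows `1` and `2` then determines every remaining entry, and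
`K = [[1,1,1,1],[1,ρ,-ρ,-1],[1,-ρ,ρ,-1],[1,-1,-1,1]]`, whose characteristic polynomial is computed
directly.
-/

open Matrix Polynomial Complex

/-- A 4×4 complex Hadamard matrix: unitary with all entries of absolute value `1/√4`. -/
def IsHadamard (H : Matrix (Fin 4) (Fin 4) ℂ) : Prop :=
  H * Hᴴ = 1 ∧ Hᴴ * H = 1 ∧ ∀ i j, ‖H i j‖ = 1 / Real.sqrt 4

/-- Dephased form: all entries of the 0th row and 0th column equal `1/√4`. -/
def IsDephased (H : Matrix (Fin 4) (Fin 4) ℂ) : Prop :=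
  (∀ j, H 0 j = ((1 / Real.sqrt 4 : ℝ) : ℂ)) ∧ (∀ i, H i 0 = ((1 / Real.sqrt 4 : ℝ) : ℂ))

open ComplexConjugate

theorem eq_neg_one_of_add_add_eq_neg_one {a b c : ℂ} (ha : ‖a‖ = 1) (hb : ‖b‖ = 1)
    (hc : ‖c‖ = 1) (h : a + b + c = -1) : a = -1 ∨ b = -1 ∨ c = -1 := by
  have hconj (z : ℂ) (hz : ‖z‖ = 1) : z * conj z = 1 := by
    rw [mul_conj, normSq_eq_norm_sq, hz]; norm_num
  have h' : conj a + conj b + conj c = -1 := by simpa using congrArg conj h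
  have hprod : (a + 1) * (b + 1) * (c + 1) = 0 := by
    linear_combination h - b * c * hconj a ha - a * c * hconj b hb - a * b * hconj c hc
      + a * b * c * h'
  simp only [mul_eq_zero, add_eq_zero_iff_eq_neg] at hprod
  tauto

theorem mul_conjTranspose_submatrix_eq_one {n α : Type*} [Fintype n] [DecidableEq n]
    [Semiring α] [Star α] {A : Matrix n n α} (hA : A * Aᴴ = 1) (σ : Equiv.Perm n) :
    A.submatrix σ σ * (A.submatrix σ σ)ᴴ = 1 := by
  rw [conjTranspose_submatrix, submatrix_mul_equiv, hA, submatrix_one_equiv]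

theorem exists_perm_fin_four {j k : Fin 4} (hj : j ≠ 0) (hk : k ≠ 0) (hkj : k ≠ j) :
    ∃ σ : Equiv.Perm (Fin 4), σ 0 = 0 ∧ σ 1 = j ∧ σ 3 = k := by
  revert j k
  decide

section Hadamard

variable {H : Matrix (Fin 4) (Fin 4) ℂ}

private theorem sqrt_four : Real.sqrt 4 = 2 := by
  rw [show (4 : ℝ) = 2 ^ 2 by norm_num, Real.sqrt_sq zero_le_two]

theorem isDephased_iff : IsDephased H ↔ (∀ j, H 0 j = 1 / 2) ∧ ∀ i, H i 0 = 1 / 2 := by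
  simp [IsDephased, sqrt_four]

theorem IsDephased.submatrix (hd : IsDephased H) {σ : Fin 4 → Fin 4} (hσ : σ 0 = 0) :
    IsDephased (H.submatrix σ σ) := by
  obtain ⟨hrow, hcol⟩ := hd
  exact ⟨fun j => by simp [hσ, hrow], fun i => by simp [hσ, hcol]⟩

theorem IsHadamard.norm_apply (hH : _root_.IsHadamard H) (i j : Fin 4) : ‖H i j‖ = 1 / 2 := by
  rw [hH.2.2, sqrt_four]

theorem IsDephased.row_sum_eq_neg_half (hd : IsDephased H) (hunit : H * Hᴴ = 1) {i : Fin 4}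
    (hi : i ≠ 0) :
    H i 1 + H i 2 + H i 3 = -(1 / 2) := by
  obtain ⟨hrow, hcol⟩ := isDephased_iff.mp hd
  have h := congrFun (congrFun hunit i) 0
  simp only [mul_apply, Fin.sum_univ_four, conjTranspose_apply, hrow, hcol, one_apply_ne hi,
    star_div₀, star_one, star_ofNat] at h
  linear_combination 2 * h

theorem IsHadamard.exists_apply_eq_neg_half (hH : _root_.IsHadamard H) (hd : IsDephased H)
    {i : Fin 4} (hi : i ≠ 0) : ∃ k, k ≠ 0 ∧ H i k = -(1 / 2) := by
  have hnorm (k : Fin 4) : ‖2 * H i k‖ = 1 := by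
    rw [norm_mul, hH.norm_apply]; norm_num
  have hsum : 2 * H i 1 + 2 * H i 2 + 2 * H i 3 = -1 := by
    linear_combination 2 * hd.row_sum_eq_neg_half hH.1 hi
  rcases eq_neg_one_of_add_add_eq_neg_one (hnorm 1) (hnorm 2) (hnorm 3) hsum with h | h | h
  · exact ⟨1, by decide, by linear_combination h / 2⟩
  · exact ⟨2, by decide, by linear_combination h / 2⟩
  · exact ⟨3, by decide, by linear_combination h / 2⟩

noncomputable def hadamardNormalForm (ρ : ℂ) : Matrix (Fin 4) (Fin 4) ℂ :=
  (1 / 2 : ℂ) • !![1, 1, 1, 1; 1, ρ, -ρ, -1; 1, -ρ, ρ, -1; 1, -1, -1, 1]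

theorem charpoly_hadamardNormalForm (ρ : ℂ) :
    (hadamardNormalForm ρ).charpoly = (X - 1) ^ 2 * (X + 1) * (X - C ρ) := by
  refine Polynomial.funext fun x => ?_
  simp [hadamardNormalForm, charpoly, charmatrix, det_succ_row_zero, Fin.sum_univ_succ,
    Fin.succAbove]
  ring

theorem eq_hadamardNormalForm (hunit : H * Hᴴ = 1) (hd : IsDephased H) (hsym : H.IsSymm)
    {ρ : ℂ} (habs : ‖ρ‖ = 1) (hρ1 : ρ ≠ 1) (h11 : H 1 1 = ρ / 2) (h13 : H 1 3 = -(1 / 2)) :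
    H = hadamardNormalForm ρ := by
  obtain ⟨hrow, hcol⟩ := isDephased_iff.mp hd
  have hρρ : ρ * conj ρ = 1 := by rw [mul_conj, normSq_eq_norm_sq, habs]; norm_num
  have h21 : H 2 1 = H 1 2 := hsym.apply 1 2
  have h31 : H 3 1 = H 1 3 := hsym.apply 1 3
  have h32 : H 3 2 = H 2 3 := hsym.apply 2 3
  have hrow1 := hd.row_sum_eq_neg_half hunit (i := 1) (by decide)
  have hrow2 := hd.row_sum_eq_neg_half hunit (i := 2) (by decide)
  have hrow3 := hd.row_sum_eq_neg_half hunit (i := 3) (by decide)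
  have h12 : H 1 2 = -(ρ / 2) := by linear_combination hrow1 - h11 - h13
  have horth := congrFun (congrFun hunit 2) 1
  simp only [mul_apply, Fin.sum_univ_four, conjTranspose_apply, hcol, h21, h11, h12, h13,
    one_apply_ne (show (2 : Fin 4) ≠ 1 by decide), star_def, map_div₀, map_neg, map_one,
    map_ofNat] at horth
  have hq : (1 - conj ρ) * (H 2 2 - ρ / 2) = 0 := by
    rw [h21, h12] at hrow2
    linear_combination hrow2 + 2 * horth + hρρ
  have hconj : 1 - conj ρ ≠ 0 :=
    sub_ne_zero.mpr fun h => hρ1 (by simpa using (congrArg conj h).symm)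
  have h22 : H 2 2 = ρ / 2 := sub_eq_zero.mp ((mul_eq_zero.mp hq).resolve_left hconj)
  have h23 : H 2 3 = -(1 / 2) := by linear_combination hrow2 - h21 - h12 - h22
  have h33 : H 3 3 = 1 / 2 := by linear_combination hrow3 - h31 - h32 - h13 - h23
  ext i j
  fin_cases i <;> fin_cases j <;> simp [hadamardNormalForm, hrow, hcol, h11, h12, h13, h21, h22,
    h23, h31, h32, h33] <;> ring

end Hadamard

theorem symmetric_hadamard_charpoly
    (H : Matrix (Fin 4) (Fin 4) ℂ)
    (hH : _root_.IsHadamard H) (hd : IsDephased H) (hsym : H = Hᵀ)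
    (ρ : ℂ) (hρ : ρ.im ≠ 0) (habs : ‖ρ‖ = 1)
    (hdiag : ∃ j, H j j = ρ / 2) :
    H.charpoly = (X - 1) ^ 2 * (X + 1) * (X - C ρ) := by
  obtain ⟨j, hj⟩ := hdiag
  obtain ⟨hrow, -⟩ := isDephased_iff.mp hd
  have hρ1 : ρ ≠ 1 := by rintro rfl; simp at hρ
  have hρm1 : ρ ≠ -1 := by rintro rfl; simp at hρ
  have hj0 : j ≠ 0 := by
    rintro rfl
    exact hρ1 (by linear_combination 2 * hrow 0 - 2 * hj)
  obtain ⟨k, hk0, hjk⟩ := hH.exists_apply_eq_neg_half hd hj0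
  have hkj : k ≠ j := by
    rintro rfl
    exact hρm1 (by linear_combination 2 * hjk - 2 * hj)
  obtain ⟨σ, hσ0, hσ1, hσ3⟩ := exists_perm_fin_four hj0 hk0 hkj
  have hnf : H.submatrix σ σ = hadamardNormalForm ρ :=
    eq_hadamardNormalForm (mul_conjTranspose_submatrix_eq_one hH.1 σ) (hd.submatrix hσ0)
      (IsSymm.submatrix hsym.symm σ) habs hρ1 (by simp [hσ1, hj]) (by simp [hσ1, hσ3, hjk])
  rw [← charpoly_hadamardNormalForm, ← hnf]
  exact (charpoly_reindex σ.symm H).symm
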